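/- Let β > 1, K > 0, T > 0 and g_T(s) = K ∫₀^s (log(T/u))^{2/β} du. Then for all 0 < s < T: ∫₀^s (1/β)(g_T'(u))^β du − (s^{1−β}/β)(g_T(s))^β < (4 K^β s)/β. -/

import Mathlib

/-!
Write `L = log (T / s)` and `t = log (s / u)`, so that `log (T / u) = L + t`; with respect to
`du / s` on `(0, s)`, `t` has mean `1` and second moment `2`. With `a = 2 / β`, the action
integrand is `K ^ β (L + t) ^ 2 / β`, with integral `K ^ β s (L ^ 2 + 2 L + 2) / β`. For the
endpoint term, the second-order bound `(1 + y) ^ a ≥ 1 + a y - a |a - 1| y ^ 2 / 2` shows that the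
mean of `(L + t) ^ a` is at least `L ^ a (1 + z)` with `z = a / L - a |a - 1| / L ^ 2`, and
Bernoulli's inequality `(1 + z) ^ β ≥ 1 + β z` raises this to
`mean ^ β ≥ L ^ 2 + 2 L - 2 |a - 1| > L ^ 2 + 2 L - 2`, because `0 < a < 2`.
-/

open MeasureTheory intervalIntegral Real Set Filter Topology

theorem one_sub_abs_mul_le_rpow_one_add {p y : ℝ} (hp : -1 ≤ p) (hy : 0 ≤ y) :
    1 - |p| * y ≤ (1 + y) ^ p := by
  rcases le_total 0 p with hp0 | hp0
  · nlinarith [one_le_rpow (by linarith : (1 : ℝ) ≤ 1 + y) hp0, abs_nonneg p]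
  · have hpos : 0 < 1 + y := by linarith
    have hq : 0 < (1 + y) ^ (-p) := rpow_pos_of_pos hpos _
    have hle : (1 + y) ^ (-p) ≤ 1 + -p * y :=
      rpow_one_add_le_one_add_mul_self (by linarith) (by linarith) (by linarith)
    rw [abs_of_nonpos hp0, ← inv_inv ((1 + y) ^ p), ← rpow_neg hpos.le, inv_eq_one_div,
      le_div_iff₀ hq]
    rcases le_total (1 + p * y) 0 with h | h
    · nlinarith
    · nlinarith [mul_le_mul_of_nonneg_left hle h, sq_nonneg (p * y)]

theorem one_add_mul_sub_le_rpow_one_add {a y : ℝ} (ha : 0 ≤ a) (hy : 0 ≤ y) :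
    1 + a * y - a * |a - 1| / 2 * y ^ 2 ≤ (1 + y) ^ a := by
  let g : ℝ → ℝ := fun x => (1 + x) ^ a - (1 + a * x - a * |a - 1| / 2 * x ^ 2)
  have hderiv : ∀ x ∈ Ici (0 : ℝ),
      HasDerivAt g (a * (1 + x) ^ (a - 1) - (a - a * |a - 1| * x)) x := by
    intro x (hx : 0 ≤ x)
    have h1 := ((hasDerivAt_id x).const_add 1).rpow_const (p := a)
      (Or.inl (by simp only [id]; linarith))
    have h2 := ((hasDerivAt_id x).const_mul a |>.const_add 1).sub
      ((hasDerivAt_pow 2 x).const_mul (a * |a - 1| / 2))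
    exact (h1.sub h2).congr_deriv (by simp only [id]; ring)
  have hmono : MonotoneOn g (Ici 0) := by
    refine monotoneOn_of_hasDerivWithinAt_nonneg (convex_Ici 0)
      (fun x hx => (hderiv x hx).continuousAt.continuousWithinAt)
      (fun x hx => (hderiv x (interior_subset hx)).hasDerivWithinAt) fun x hx => ?_
    have := one_sub_abs_mul_le_rpow_one_add (p := a - 1) (by linarith)
      (interior_subset hx : 0 ≤ x)
    nlinarith
  have hg0 : g 0 = 0 := by simp [g]
  have := hmono self_mem_Ici hy hy
  rw [hg0] at this
  exact sub_nonneg.mp this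

theorem rpow_mul_one_add_mul_sub_le_rpow_add {a L t : ℝ} (ha : 0 ≤ a) (hL : 0 < L)
    (ht : 0 ≤ t) :
    L ^ a * (1 + a / L * t - a * |a - 1| / (2 * L ^ 2) * t ^ 2) ≤ (L + t) ^ a := by
  have h := one_add_mul_sub_le_rpow_one_add ha (div_nonneg ht hL.le)
  have hLt : L + t = L * (1 + t / L) := by field_simp
  rw [hLt, mul_rpow hL.le (by positivity)]
  refine le_of_eq_of_le ?_ (mul_le_mul_of_nonneg_left h (by positivity))
  field_simp

theorem rpow_mul_one_add_mul_le_rpow {x z m β : ℝ} (hx : 0 ≤ x) (hm : 0 ≤ m) (hβ : 1 ≤ β)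
    (hxm : x * (1 + z) ≤ m) : x ^ β * (1 + β * z) ≤ m ^ β := by
  rcases lt_or_ge z (-1) with hz | hz
  · have : 1 + β * z ≤ 0 := by nlinarith
    exact (mul_nonpos_of_nonneg_of_nonpos (by positivity) this).trans (by positivity)
  · calc x ^ β * (1 + β * z) ≤ x ^ β * (1 + z) ^ β :=
          mul_le_mul_of_nonneg_left (one_add_mul_self_le_rpow_one_add hz hβ) (by positivity)
      _ = (x * (1 + z)) ^ β := (mul_rpow hx (by linarith)).symm
      _ ≤ m ^ β := rpow_le_rpow (mul_nonneg hx (by linarith)) hxm (by linarith)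

theorem abs_rpow_le_one_add_sq {a : ℝ} (ha : 0 ≤ a) (ha2 : a ≤ 2) (x : ℝ) :
    |x ^ a| ≤ 1 + x ^ 2 := by
  refine (abs_rpow_le_abs_rpow x a).trans ?_
  rcases le_total |x| 1 with hx | hx
  · nlinarith [rpow_le_one (abs_nonneg x) hx ha, sq_nonneg x]
  · have := rpow_le_rpow_of_exponent_le hx ha2
    rw [rpow_two, sq_abs] at this
    linarith

theorem log_div_nonneg {T u : ℝ} (hu : 0 ≤ u) (huT : u ≤ T) : 0 ≤ log (T / u) := by
  rcases hu.eq_or_lt with rfl | hu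
  · simp
  · exact log_nonneg ((one_le_div hu).mpr huT)

theorem eqOn_log_div_uIoo {c s : ℝ} (hc : c ≠ 0) :
    EqOn (fun u => log c - log u) (fun u => log (c / u)) (uIoo 0 s) := fun u hu =>
  (log_div hc (ne_of_mem_of_not_mem hu (by simpa [uIoo] using le_of_lt))).symm

theorem intervalIntegrable_log_div {c s : ℝ} (hc : c ≠ 0) :
    IntervalIntegrable (fun u => log (c / u)) volume 0 s := by
  have h : IntervalIntegrable (fun u => log c - log u) volume 0 s :=
    intervalIntegrable_const.sub intervalIntegrable_log'
  exact h.congr_uIoo (eqOn_log_div_uIoo hc)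

theorem integral_log_div {c s : ℝ} (hc : c ≠ 0) :
    ∫ u in 0..s, log (c / u) = s * (log (c / s) + 1) := by
  rcases eq_or_ne s 0 with rfl | hs
  · simp
  rw [← integral_congr_uIoo (eqOn_log_div_uIoo hc),
    integral_sub intervalIntegrable_const intervalIntegrable_log',
    intervalIntegral.integral_const, integral_log_from_zero, log_div hc hs, smul_eq_mul]
  ring

theorem hasDerivAt_log_const_div {c u : ℝ} (hc : c ≠ 0) (hu : u ≠ 0) :
    HasDerivAt (fun u => log (c / u)) (-u⁻¹) u := by
  have h := ((hasDerivAt_inv hu).const_mul c).log (by simp [hc, hu])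
  simp only [← div_eq_mul_inv] at h
  convert h using 1
  field_simp

theorem hasDerivAt_mul_log_div_sq {c u : ℝ} (hc : c ≠ 0) (hu : u ≠ 0) :
    HasDerivAt (fun u => u * (log (c / u) ^ 2 + 2 * log (c / u) + 2)) (log (c / u) ^ 2) u := by
  have h := hasDerivAt_log_const_div hc hu
  have := (hasDerivAt_id u).mul (((h.pow 2).add (h.const_mul 2)).add_const 2)
  refine this.congr_deriv ?_
  simp only [id, Pi.add_apply, Pi.pow_apply]
  field_simp
  ring

theorem tendsto_mul_log_div_sq_nhdsGT_zero {c : ℝ} (hc : 0 < c) :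
    Tendsto (fun u => u * (log (c / u) ^ 2 + 2 * log (c / u) + 2)) (𝓝[>] 0) (𝓝 0) := by
  have hlog (n : ℕ) := tendsto_pow_log_div_mul_add_atTop 1 0 n one_ne_zero
  have hG := (((hlog 2).add ((hlog 1).const_mul 2)).add ((hlog 0).const_mul 2)).const_mul c
  have hw : Tendsto (fun u => c * u⁻¹) (𝓝[>] 0) atTop :=
    tendsto_inv_nhdsGT_zero.const_mul_atTop hc
  refine ((hG.comp hw).congr' ?_).trans (by simp)
  -- `u * P (log (c / u)) = c * (P (log w) / w)` for `w = c / u`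
  filter_upwards [self_mem_nhdsWithin] with u (hu : 0 < u)
  simp only [Function.comp, div_eq_mul_inv]
  field_simp
  ring

theorem continuousOn_mul_log_div_sq {c : ℝ} (hc : 0 < c) :
    ContinuousOn (fun u => u * (log (c / u) ^ 2 + 2 * log (c / u) + 2)) (Ici 0) := by
  intro u hu
  rcases (mem_Ici.mp hu).eq_or_lt with rfl | hu
  · rw [← continuousWithinAt_Ioi_iff_Ici, ContinuousWithinAt, zero_mul]
    exact tendsto_mul_log_div_sq_nhdsGT_zero hc
  · exact (hasDerivAt_mul_log_div_sq hc.ne' hu.ne').continuousAt.continuousWithinAt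

theorem intervalIntegrable_log_div_sq {c s : ℝ} (hc : 0 < c) (hs : 0 ≤ s) :
    IntervalIntegrable (fun u => log (c / u) ^ 2) volume 0 s := by
  refine intervalIntegrable_deriv_of_nonneg ((continuousOn_mul_log_div_sq hc).mono ?_)
    (fun u hu => hasDerivAt_mul_log_div_sq hc.ne' ?_) fun u _ => sq_nonneg _
  · rw [uIcc_of_le hs]; exact Icc_subset_Ici_self
  · rw [min_eq_left hs] at hu; exact hu.1.ne'

theorem integral_log_div_sq {c s : ℝ} (hc : 0 < c) (hs : 0 ≤ s) :
    ∫ u in 0..s, log (c / u) ^ 2 = s * (log (c / s) ^ 2 + 2 * log (c / s) + 2) := by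
  rw [integral_eq_sub_of_hasDerivAt_of_le hs
    ((continuousOn_mul_log_div_sq hc).mono Icc_subset_Ici_self)
    (fun u hu => hasDerivAt_mul_log_div_sq hc.ne' hu.1.ne') (intervalIntegrable_log_div_sq hc hs)]
  simp

theorem intervalIntegrable_log_div_rpow {c s a : ℝ} (hc : 0 < c) (hs : 0 ≤ s) (ha : 0 ≤ a)
    (ha2 : a ≤ 2) : IntervalIntegrable (fun u => log (c / u) ^ a) volume 0 s :=
  (intervalIntegrable_const.add (intervalIntegrable_log_div_sq hc hs)).mono_fun'
    (by fun_prop : Measurable fun u => log (c / u) ^ a).aestronglyMeasurable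
    (ae_of_all _ fun u => abs_rpow_le_one_add_sq ha ha2 _)

theorem integral_add_mul_log_div_sub_mul_sq {s : ℝ} (hs : 0 < s) (p q r : ℝ) :
    ∫ u in 0..s, (p + q * log (s / u) - r * log (s / u) ^ 2) = s * (p + q - 2 * r) := by
  have h1 := intervalIntegrable_log_div (s := s) hs.ne'
  have h2 := intervalIntegrable_log_div_sq hs hs.le
  rw [integral_sub (intervalIntegrable_const.add (h1.const_mul q)) (h2.const_mul r),
    integral_add intervalIntegrable_const (h1.const_mul q), intervalIntegral.integral_const_mul,
    intervalIntegral.integral_const_mul,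
    intervalIntegral.integral_const, integral_log_div hs.ne', integral_log_div_sq hs hs.le,
    div_self hs.ne', log_one, smul_eq_mul]
  ring

theorem mul_le_integral_log_div_rpow {T s a : ℝ} (hs : 0 < s) (hsT : s < T) (ha : 0 ≤ a)
    (ha2 : a ≤ 2) :
    s * (log (T / s) ^ a * (1 + a / log (T / s) - a * |a - 1| / log (T / s) ^ 2)) ≤
      ∫ u in 0..s, log (T / u) ^ a := by
  set L := log (T / s)
  have hL : 0 < L := log_pos ((one_lt_div hs).mpr hsT)
  have hlog : ∀ u ∈ Ioo 0 s, log (T / u) = L + log (s / u) := fun u hu => by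
    rw [← log_mul (div_pos (hs.trans hsT) hs).ne' (div_pos hs hu.1).ne',
      div_mul_div_cancel₀ hs.ne']
  set r := a * |a - 1| / (2 * L ^ 2) with hr
  have hint : IntervalIntegrable
      (fun u => L ^ a * (1 + a / L * log (s / u) - r * log (s / u) ^ 2)) volume 0 s :=
    ((intervalIntegrable_const.add ((intervalIntegrable_log_div hs.ne').const_mul _)).sub
      ((intervalIntegrable_log_div_sq hs hs.le).const_mul _)).const_mul _
  calc s * (L ^ a * (1 + a / L - a * |a - 1| / L ^ 2))
      = ∫ u in 0..s, L ^ a * (1 + a / L * log (s / u) - r * log (s / u) ^ 2) := by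
        rw [intervalIntegral.integral_const_mul, integral_add_mul_log_div_sub_mul_sq hs, hr]
        field_simp
    _ ≤ ∫ u in 0..s, log (T / u) ^ a :=
        integral_mono_on_of_le_Ioo hs.le hint
          (intervalIntegrable_log_div_rpow (hs.trans hsT) hs.le ha ha2) fun u hu => by
          rw [hlog u hu]
          exact rpow_mul_one_add_mul_sub_le_rpow_add ha hL
            (log_div_nonneg hu.1.le hu.2.le)

theorem integral_log_div_rpow_nonneg {T s a : ℝ} (hs : 0 ≤ s) (hsT : s ≤ T) :
    0 ≤ ∫ u in 0..s, log (T / u) ^ a :=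
  integral_nonneg hs fun _ hu => rpow_nonneg (log_div_nonneg hu.1 (hu.2.trans hsT)) _

theorem le_rpow_average_log_div_rpow {β T s : ℝ} (hβ : 1 ≤ β) (hs : 0 < s) (hsT : s < T) :
    log (T / s) ^ 2 + 2 * log (T / s) - 2 * |2 / β - 1| ≤
      ((∫ u in 0..s, log (T / u) ^ (2 / β)) / s) ^ β := by
  have hβ0 : 0 < β := by linarith
  have hmean := mul_le_integral_log_div_rpow hs hsT (by positivity) (div_le_self zero_le_two hβ)
  set L := log (T / s)
  have hL : 0 < L := log_pos ((one_lt_div hs).mpr hsT)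
  have hI := integral_log_div_rpow_nonneg (a := 2 / β) hs.le hsT.le
  have h := rpow_mul_one_add_mul_le_rpow (rpow_nonneg hL.le _) (div_nonneg hI hs.le) hβ
    (z := 2 / β / L - 2 / β * |2 / β - 1| / L ^ 2)
    ((le_div_iff₀' hs).mpr (by rwa [← add_sub_assoc]))
  rw [← rpow_mul hL.le, div_mul_cancel₀ _ hβ0.ne', rpow_two] at h
  convert h using 1
  field_simp
  ring

theorem integral_rpow_mul_log_div_rpow {β K T s : ℝ} (hβ : 0 < β) (hK : 0 ≤ K) (hT : 0 < T)
    (hs : 0 ≤ s) (hsT : s ≤ T) :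
    ∫ u in 0..s, (1 / β) * (K * log (T / u) ^ (2 / β)) ^ β =
      K ^ β / β * (s * (log (T / s) ^ 2 + 2 * log (T / s) + 2)) := by
  rw [← integral_log_div_sq hT hs, ← intervalIntegral.integral_const_mul]
  refine integral_congr_Ioo_of_le hs fun u hu => ?_
  have hlog := log_div_nonneg hu.1.le (hu.2.le.trans hsT)
  rw [mul_rpow hK (rpow_nonneg hlog _), ← rpow_mul hlog, div_mul_cancel₀ _ hβ.ne', rpow_two]
  ring

theorem stmt_9_general (β K T : ℝ) (hβ : 1 < β) (hK : 0 < K)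
    (s : ℝ) (hs : 0 < s) (hsT : s < T) :
    (∫ u in (0 : ℝ)..s, (1 / β) * (K * Real.log (T / u) ^ ((2 : ℝ) / β)) ^ β) -
      (s ^ (1 - β) / β) * (K * ∫ u in (0 : ℝ)..s, Real.log (T / u) ^ ((2 : ℝ) / β)) ^ β <
      4 * K ^ β * s / β := by
  set I := ∫ u in (0 : ℝ)..s, log (T / u) ^ ((2 : ℝ) / β)
  have hβ0 : 0 < β := by linarith
  have hI : 0 ≤ I := integral_log_div_rpow_nonneg hs.le hsT.le
  have hlower := le_rpow_average_log_div_rpow hβ.le hs hsT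
  have habs : |2 / β - 1| < 1 := abs_sub_lt_iff.mpr
    ⟨by linarith [(div_lt_iff₀ hβ0).mpr (by linarith : 2 < 2 * β)],
      by linarith [div_pos two_pos hβ0]⟩
  have hrw : s ^ (1 - β) / β * (K * I) ^ β = K ^ β / β * s * (I / s) ^ β := by
    rw [mul_rpow hK.le hI, div_rpow hI hs.le, rpow_sub hs, rpow_one]
    field_simp
  rw [integral_rpow_mul_log_div_rpow hβ0 hK.le (hs.trans hsT) hs.le hsT.le, hrw]
  calc K ^ β / β * (s * (log (T / s) ^ 2 + 2 * log (T / s) + 2)) - K ^ β / β * s * (I / s) ^ β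
      = K ^ β / β * s * (log (T / s) ^ 2 + 2 * log (T / s) + 2 - (I / s) ^ β) := by ring
    _ < K ^ β / β * s * 4 := mul_lt_mul_of_pos_left (by linarith) (by positivity)
    _ = 4 * K ^ β * s / β := by ring

/-- Inequality (3.4): the action of the trajectory traced by `g_T` exceeds the
straight-line (Jensen) lower bound by at most `4K^β s/β`. -/
theorem stmt_9 (β K T : ℝ) (hβ : 1 < β) (hK : 0 < K) (hT : 0 < T)
    (s : ℝ) (hs : 0 < s) (hsT : s < T) :
    (∫ u in (0 : ℝ)..s, (1 / β) * (K * Real.log (T / u) ^ ((2 : ℝ) / β)) ^ β) -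
      (s ^ (1 - β) / β) * (K * ∫ u in (0 : ℝ)..s, Real.log (T / u) ^ ((2 : ℝ) / β)) ^ β <
      4 * K ^ β * s / β :=
  stmt_9_general β K T hβ hK s hs hsT
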